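/- Let μ be a Borel probability measure on [0,1]^d with cumulative distribution function H such that H(1,…,1,x,1,…,1) = x for every x ∈ [0,1] and every coordinate position (uniform margins). Let w = (w₁,…,w_d) ∈ (0,1]^d satisfy w₁ + ⋯ + w_d = 1, and suppose there is a real number a > 0 such that H(x^{w₁},…,x^{w_d}) = x^a for all x ∈ (0,1). Set ν := ∫_{[0,1]^d} ν_w(u) dμ(u). Then ν + c(w) < 1 and a = (ν + c(w)) / (1 − ν − c(w)). -/

import Mathlib

open MeasureTheory Finset

/-- The multivariate `w`-madogram integrand
`ν_w(u) = max_i uᵢ^(1/wᵢ) − (1/d) Σᵢ uᵢ^(1/wᵢ)`. -/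
noncomputable def nuW (d : ℕ) (hd : 0 < d) (w u : Fin d → ℝ) : ℝ :=
  (Finset.univ.sup' (Finset.univ_nonempty_iff.mpr (Fin.pos_iff_nonempty.mp hd))
      fun i => u i ^ (1 / w i)) -
    (1 / (d : ℝ)) * ∑ i, u i ^ (1 / w i)

/-- Cumulative distribution function of a measure on `[0,1]^d ⊆ ℝ^d`. -/
noncomputable def cdf {d : ℕ} (μ : Measure (Fin d → ℝ)) (u : Fin d → ℝ) : ℝ :=
  (μ {v | ∀ i, v i ≤ u i}).toReal

/-!
On the unit cube `{u | u i ^ (1 / w i) ≤ t} = {u | u i ≤ t ^ w i}`, so by the uniform margins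
the coordinate powers `u i ^ (1 / w i)` have distribution function `t ^ w i` on `[0, 1]`, and by
the diagonal hypothesis their maximum has distribution function `t ^ a`. A `[0, 1]`-valued variable
with distribution function `t ^ b` has mean `∫₀¹ (1 - t ^ b) dt = b / (1 + b)`, hence
`ν = a / (1 + a) - c(w)`, which is solved for `a`.
-/

theorem integral_one_sub_rpow {b : ℝ} (hb : -1 < b) :
    ∫ t in (0:ℝ)..1, (1 - t ^ b) = b / (1 + b) := by
  have hb' : 1 + b ≠ 0 := by linarith
  rw [intervalIntegral.integral_sub intervalIntegrable_const
      (intervalIntegral.intervalIntegrable_rpow' hb), integral_rpow (Or.inl hb),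
    intervalIntegral.integral_const, add_comm b 1, Real.one_rpow, Real.zero_rpow hb']
  field_simp
  ring

theorem integral_eq_of_measureReal_le_eq_rpow {α : Type*} [MeasurableSpace α] {μ : Measure α}
    [IsProbabilityMeasure μ] {g : α → ℝ} (hg : Measurable g)
    (h01 : ∀ᵐ u ∂μ, g u ∈ Set.Icc 0 1) {b : ℝ} (hb : -1 < b)
    (hcdf : ∀ t ∈ Set.Ioo 0 1, μ.real {u | g u ≤ t} = t ^ b) :
    ∫ u, g u ∂μ = b / (1 + b) := by
  have htail_zero : ∀ t ∈ Set.Ioi 0 \ Set.Ioo 0 1, μ.real {u | t < g u} = 0 := by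
    intro t ⟨ht0, ht⟩
    have ht1 : 1 ≤ t := not_lt.mp fun h => ht ⟨ht0, h⟩
    refine (measureReal_eq_zero_iff).mpr (measure_mono_null ?_ (ae_iff.mp h01))
    intro u hu h
    exact (not_le.mpr hu) (h.2.trans ht1)
  have htail : ∀ t ∈ Set.Ioo 0 1, μ.real {u | t < g u} = 1 - t ^ b := by
    intro t ht
    rw [← hcdf t ht, ← probReal_compl_eq_one_sub (measurableSet_le hg measurable_const)]
    simp only [Set.compl_ofPred, not_le]
  rw [(Integrable.of_mem_Icc 0 1 hg.aemeasurable h01).integral_eq_integral_meas_lt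
      (h01.mono fun _ hu => hu.1),
    setIntegral_eq_of_subset_of_forall_sdiff_eq_zero measurableSet_Ioi Set.Ioo_subset_Ioi_self
      htail_zero, setIntegral_congr_fun measurableSet_Ioo htail, ← integral_Ioc_eq_integral_Ioo,
    ← intervalIntegral.integral_of_le zero_le_one, integral_one_sub_rpow hb]

theorem eq_div_one_sub_of_eq_div_one_add {a x : ℝ} (ha : -1 < a) (h : x = a / (1 + a)) :
    x < 1 ∧ a = x / (1 - x) := by
  have ha' : 0 < 1 + a := by linarith
  have hx : 1 - x = 1 / (1 + a) := by rw [h]; field_simp; ring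
  refine ⟨by linarith [hx ▸ (one_div_pos.mpr ha')], ?_⟩
  rw [hx, h]
  field_simp

theorem Real.rpow_one_div_le_iff {x t w : ℝ} (hx : 0 ≤ x) (ht : 0 ≤ t) (hw : 0 < w) :
    x ^ (1 / w) ≤ t ↔ x ≤ t ^ w := by
  rw [one_div, Real.rpow_inv_le_iff_of_pos hx ht hw]

theorem Real.rpow_one_div_mem_Icc {x w : ℝ} (hx : x ∈ Set.Icc (0:ℝ) 1) (hw : 0 < w) :
    x ^ (1 / w) ∈ Set.Icc (0:ℝ) 1 :=
  ⟨Real.rpow_nonneg hx.1 _, Real.rpow_le_one hx.1 hx.2 (by positivity)⟩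

theorem forall_le_update_const_iff {ι α : Type*} [DecidableEq ι] [Preorder α] {u : ι → α}
    {c : α} (hu : ∀ j, u j ≤ c) (i : ι) (x : α) :
    (∀ j, u j ≤ Function.update (fun _ => c) i x j) ↔ u i ≤ x := by
  refine ⟨fun h => by simpa using h i, fun h j => ?_⟩
  rcases eq_or_ne j i with rfl | hj
  · simpa using h
  · simpa [hj] using hu j

section UnitCube

variable {d : ℕ} {μ : Measure (Fin d → ℝ)} {w : Fin d → ℝ}

theorem ae_forall_mem_Icc_of_measure_compl_pi
    (hμ : μ (Set.univ.pi fun _ : Fin d => Set.Icc (0:ℝ) 1)ᶜ = 0) :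
    ∀ᵐ u ∂μ, ∀ i, u i ∈ Set.Icc (0:ℝ) 1 := by
  filter_upwards [mem_ae_iff.mpr hμ] with u hu
  exact Set.mem_univ_pi.mp hu

theorem measurable_sup'_rpow_one_div (hne : (univ : Finset (Fin d)).Nonempty) :
    Measurable fun u : Fin d → ℝ => univ.sup' hne fun i => u i ^ (1 / w i) := by
  convert Finset.measurable_sup' hne fun i _ =>
    (show Measurable fun u : Fin d → ℝ => u i ^ (1 / w i) by fun_prop) with u
  exact (Finset.sup'_apply hne (fun i (v : Fin d → ℝ) => v i ^ (1 / w i)) u).symm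

variable (hcube : ∀ᵐ u ∂μ, ∀ i, u i ∈ Set.Icc (0:ℝ) 1) (hw : ∀ i, 0 < w i)
include hcube hw

theorem ae_rpow_one_div_mem_Icc (i : Fin d) :
    ∀ᵐ u ∂μ, u i ^ (1 / w i) ∈ Set.Icc (0:ℝ) 1 :=
  hcube.mono fun _ hu => Real.rpow_one_div_mem_Icc (hu i) (hw i)

theorem ae_sup'_rpow_one_div_mem_Icc (hne : (univ : Finset (Fin d)).Nonempty) :
    ∀ᵐ u ∂μ, univ.sup' hne (fun i => u i ^ (1 / w i)) ∈ Set.Icc (0:ℝ) 1 := by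
  filter_upwards [hcube] with u hu
  obtain ⟨i, hi⟩ := hne
  exact ⟨(Real.rpow_one_div_mem_Icc (hu i) (hw i)).1.trans
      (le_sup' (fun j => u j ^ (1 / w j)) hi),
    sup'_le _ _ fun j _ => (Real.rpow_one_div_mem_Icc (hu j) (hw j)).2⟩

theorem measureReal_rpow_one_div_le (i : Fin d) {t : ℝ} (ht : 0 ≤ t) :
    μ.real {u | u i ^ (1 / w i) ≤ t} = cdf μ (Function.update (fun _ => 1) i (t ^ w i)) := by
  refine measureReal_congr (hcube.mono fun u hu => ?_)
  change (u i ^ (1 / w i) ≤ t) = ∀ j, u j ≤ _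
  rw [forall_le_update_const_iff (fun j => (hu j).2), Real.rpow_one_div_le_iff (hu i).1 ht (hw i)]

theorem measureReal_sup'_rpow_one_div_le (hne : (univ : Finset (Fin d)).Nonempty) {t : ℝ}
    (ht : 0 ≤ t) :
    μ.real {u | univ.sup' hne (fun i => u i ^ (1 / w i)) ≤ t} = cdf μ (fun i => t ^ w i) := by
  refine measureReal_congr (hcube.mono fun u hu => ?_)
  change (univ.sup' hne (fun i => u i ^ (1 / w i)) ≤ t) = ∀ i, u i ≤ t ^ w i
  simp only [sup'_le_iff, mem_univ, true_implies, Real.rpow_one_div_le_iff (hu _).1 ht (hw _)]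

variable [IsProbabilityMeasure μ]

theorem integral_rpow_one_div
    (hmarg : ∀ i : Fin d, ∀ x ∈ Set.Icc (0:ℝ) 1,
      cdf μ (Function.update (fun _ => (1:ℝ)) i x) = x) (i : Fin d) :
    ∫ u, u i ^ (1 / w i) ∂μ = w i / (1 + w i) := by
  refine integral_eq_of_measureReal_le_eq_rpow (by fun_prop) (ae_rpow_one_div_mem_Icc hcube hw i)
    (by linarith [hw i]) fun t ht => ?_
  rw [measureReal_rpow_one_div_le hcube hw i ht.1.le,
    hmarg i _ ⟨Real.rpow_nonneg ht.1.le _, Real.rpow_le_one ht.1.le ht.2.le (hw i).le⟩]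

theorem integral_sup'_rpow_one_div (hne : (univ : Finset (Fin d)).Nonempty) {a : ℝ} (ha : -1 < a)
    (hdiag : ∀ x ∈ Set.Ioo (0:ℝ) 1, cdf μ (fun i => x ^ w i) = x ^ a) :
    ∫ u, univ.sup' hne (fun i => u i ^ (1 / w i)) ∂μ = a / (1 + a) := by
  refine integral_eq_of_measureReal_le_eq_rpow (measurable_sup'_rpow_one_div hne)
    (ae_sup'_rpow_one_div_mem_Icc hcube hw hne) ha fun t ht => ?_
  rw [measureReal_sup'_rpow_one_div_le hcube hw hne ht.1.le, hdiag t ht]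

theorem integral_nuW (hd : 0 < d)
    (hmarg : ∀ i : Fin d, ∀ x ∈ Set.Icc (0:ℝ) 1,
      cdf μ (Function.update (fun _ => (1:ℝ)) i x) = x)
    {a : ℝ} (ha : -1 < a)
    (hdiag : ∀ x ∈ Set.Ioo (0:ℝ) 1, cdf μ (fun i => x ^ w i) = x ^ a) :
    ∫ u, nuW d hd w u ∂μ = a / (1 + a) - (1 / (d : ℝ)) * ∑ i, w i / (1 + w i) := by
  have hne : (univ : Finset (Fin d)).Nonempty :=
    univ_nonempty_iff.mpr (Fin.pos_iff_nonempty.mp hd)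
  have hint : ∀ i, Integrable (fun u : Fin d → ℝ => u i ^ (1 / w i)) μ := fun i =>
    .of_mem_Icc 0 1 (by fun_prop : Measurable _).aemeasurable
      (ae_rpow_one_div_mem_Icc hcube hw i)
  have hint_sup : Integrable (fun u => univ.sup' hne fun i => u i ^ (1 / w i)) μ :=
    .of_mem_Icc 0 1 (measurable_sup'_rpow_one_div hne).aemeasurable
      (ae_sup'_rpow_one_div_mem_Icc hcube hw hne)
  rw [← sum_congr rfl fun i _ => integral_rpow_one_div hcube hw hmarg i,
    ← integral_sup'_rpow_one_div hcube hw hne ha hdiag,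
    ← integral_finsetSum univ fun i _ => hint i, ← integral_const_mul,
    ← integral_sub hint_sup ((integrable_finsetSum univ fun i _ => hint i).const_mul _)]
  rfl

end UnitCube

theorem pickands_from_madogram (d : ℕ) (hd : 2 ≤ d)
    (μ : Measure (Fin d → ℝ)) [IsProbabilityMeasure μ]
    (hμ : μ (Set.univ.pi fun _ : Fin d => Set.Icc (0:ℝ) 1)ᶜ = 0)
    (hmarg : ∀ i : Fin d, ∀ x ∈ Set.Icc (0:ℝ) 1,
      cdf μ (Function.update (fun _ => (1:ℝ)) i x) = x)
    (w : Fin d → ℝ) (hw : ∀ i, 0 < w i ∧ w i ≤ 1)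
    (a : ℝ) (ha : 0 < a)
    (hdiag : ∀ x ∈ Set.Ioo (0:ℝ) 1, cdf μ (fun i => x ^ w i) = x ^ a)
    (ν : ℝ) (hν : ν = ∫ u, nuW d (by omega) w u ∂μ) :
    ν + (1 / (d : ℝ)) * (∑ i, w i / (1 + w i)) < 1 ∧
      a = (ν + (1 / (d : ℝ)) * ∑ i, w i / (1 + w i)) /
        (1 - ν - (1 / (d : ℝ)) * ∑ i, w i / (1 + w i)) := by
  have hν' : ν + (1 / (d : ℝ)) * ∑ i, w i / (1 + w i) = a / (1 + a) := by
    rw [hν, integral_nuW (ae_forall_mem_Icc_of_measure_compl_pi hμ) (fun i => (hw i).1) _ hmarg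
      (by linarith) hdiag, sub_add_cancel]
  rw [sub_sub]
  exact eq_div_one_sub_of_eq_div_one_add (by linarith) hν'
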